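/- arXiv:2206.04755 — 2 statements merged into one kernel-verified Lean document; each statement's English description precedes it below -/
import Mathlib

section
/- Let (X,φ) be an expansive dynamical system, let (U,V,γ) be a local conjugacy, and let W ⊆ U be compact. Then for all ε > 0 there exists δ > 0 such that for all z ∈ W: γ(Xˢ(z,δ)) ⊆ Xˢ(γ(z),ε) and γ(Xᵘ(z,δ)) ⊆ Xᵘ(γ(z),ε). -/
open Filter Topology Set

namespace Paper

variable {X : Type*} [MetricSpace X] [CompactSpace X]

/-- The `n`-th iterate (for `n : ℤ`) of the homeomorphism `φ`. -/
def It (φ : X ≃ₜ X) (n : ℤ) : X → X := fun x => (φ.toEquiv ^ n) x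

/-- The local stable set `Xˢ(x, ε)`. -/
def locS (φ : X ≃ₜ X) (x : X) (ε : ℝ) : Set X :=
  {y | ∀ n : ℕ, dist (It φ n x) (It φ n y) ≤ ε}

/-- The local unstable set `Xᵘ(x, ε)`. -/
def locU (φ : X ≃ₜ X) (x : X) (ε : ℝ) : Set X :=
  {y | ∀ n : ℕ, dist (It φ (-(n : ℤ)) x) (It φ (-(n : ℤ)) y) ≤ ε}

/-- The set `D_ε` on which the bracket is defined. -/
def Dset (φ : X ≃ₜ X) (ε : ℝ) : Set (X × X) :=
  {p | (locS φ p.1 ε ∩ locU φ p.2 ε).Nonempty}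

/-- `(X, φ)` is expansive with expansiveness constant `εX`. -/
def IsExpansive (φ : X ≃ₜ X) (εX : ℝ) : Prop :=
  0 < εX ∧ ∀ x y : X, (∀ n : ℤ, dist (It φ n x) (It φ n y) ≤ εX) → x = y

/-- The metric is adapted (Fried), with constants `η` and `lam`. -/
def IsAdapted (φ : X ≃ₜ X) (η lam : ℝ) : Prop :=
  0 < η ∧ 0 < lam ∧ lam < 1 ∧
    (∀ x y : X, y ∈ locS φ x η → dist (φ x) (φ y) ≤ lam * dist x y) ∧
    (∀ x y : X, y ∈ locU φ x η → dist (φ.symm x) (φ.symm y) ≤ lam * dist x y)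

/-- `p` is a periodic point of `φ`. -/
def IsPeriodic (φ : X ≃ₜ X) (p : X) : Prop :=
  ∃ n : ℕ, 1 ≤ n ∧ It φ n p = p

/-- `x` is a synchronizing point: `(x, x)` is in the interior of `D_ε` for
some `0 < ε ≤ ε₀`. -/
def IsSyncPt (φ : X ≃ₜ X) (ε₀ : ℝ) (x : X) : Prop :=
  ∃ ε : ℝ, 0 < ε ∧ ε ≤ ε₀ ∧ (x, x) ∈ interior (Dset φ ε)

/-- `(X, φ)` is irreducible. -/
def Irred (φ : X ≃ₜ X) : Prop :=
  ∀ U V : Set X, IsOpen U → IsOpen V → U.Nonempty → V.Nonempty →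
    ∃ n : ℕ, 0 < n ∧ (It φ n '' U ∩ V).Nonempty

/-- `(X, φ)` is mixing. -/
def Mixing (φ : X ≃ₜ X) : Prop :=
  ∀ U V : Set X, IsOpen U → IsOpen V → U.Nonempty → V.Nonempty →
    ∃ N : ℕ, ∀ n : ℕ, N ≤ n → (It φ n '' U ∩ V).Nonempty

/-- Every point of `(X, φ)` is non-wandering. -/
def NonWandering (φ : X ≃ₜ X) : Prop :=
  ∀ x : X, ∀ U ∈ 𝓝 x, ∃ n : ℕ, 0 < n ∧ (It φ n '' U ∩ U).Nonempty

/-- Stable equivalence `x ∼ₛ y`. -/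
def StableEq (φ : X ≃ₜ X) (x y : X) : Prop :=
  Tendsto (fun n : ℕ => dist (It φ n x) (It φ n y)) atTop (𝓝 0)

/-- Unstable equivalence `x ∼ᵤ y`. -/
def UnstableEq (φ : X ≃ₜ X) (x y : X) : Prop :=
  Tendsto (fun n : ℕ => dist (It φ (-(n : ℤ)) x) (It φ (-(n : ℤ)) y)) atTop (𝓝 0)

/-- Local conjugacy `x ∼_lc y`: a homeomorphism `γ : U → V` of open
neighborhoods with `γ x = y` and `sup_{z ∈ U} d(φⁿ z, φⁿ (γ z)) → 0` as
`n → ±∞`. -/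
def LocConj (φ : X ≃ₜ X) (x y : X) : Prop :=
  ∃ (U V : Set X) (γ γinv : X → X),
    IsOpen U ∧ IsOpen V ∧ x ∈ U ∧ y ∈ V ∧ γ x = y ∧
    Set.MapsTo γ U V ∧ Set.MapsTo γinv V U ∧
    (∀ z ∈ U, γinv (γ z) = z) ∧ (∀ w ∈ V, γ (γinv w) = w) ∧
    ContinuousOn γ U ∧ ContinuousOn γinv V ∧
    (∀ ε : ℝ, 0 < ε → ∃ N : ℕ, ∀ n : ℤ, (N : ℤ) ≤ |n| → ∀ z ∈ U,
      dist (It φ n z) (It φ n (γ z)) ≤ ε)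

/-- Stable local conjugacy `x ∼_lcs y`: a homeomorphism of `Xᵘ(x, δ)` onto
its image in `Xᵘ(y, δ')` sending `x` to `y`, uniformly asymptotic in forward
time. -/
def StableLC (φ : X ≃ₜ X) (x y : X) : Prop :=
  ∃ (δ δ' : ℝ) (γ : X → X), 0 < δ ∧ 0 < δ' ∧
    Set.MapsTo γ (locU φ x δ) (locU φ y δ') ∧
    Set.InjOn γ (locU φ x δ) ∧ ContinuousOn γ (locU φ x δ) ∧ γ x = y ∧
    (∀ ε : ℝ, 0 < ε → ∃ N : ℕ, ∀ n : ℕ, N ≤ n → ∀ z ∈ locU φ x δ,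
      dist (It φ n z) (It φ n (γ z)) ≤ ε)

/-- Unstable local conjugacy `x ∼_lcu y`: a homeomorphism of `Xˢ(x, δ)` onto
its image in `Xˢ(y, δ')` sending `x` to `y`, uniformly asymptotic in backward
time. -/
def UnstableLC (φ : X ≃ₜ X) (x y : X) : Prop :=
  ∃ (δ δ' : ℝ) (γ : X → X), 0 < δ ∧ 0 < δ' ∧
    Set.MapsTo γ (locS φ x δ) (locS φ y δ') ∧
    Set.InjOn γ (locS φ x δ) ∧ ContinuousOn γ (locS φ x δ) ∧ γ x = y ∧
    (∀ ε : ℝ, 0 < ε → ∃ N : ℕ, ∀ n : ℕ, N ≤ n → ∀ z ∈ locS φ x δ,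
      dist (It φ (-(n : ℤ)) z) (It φ (-(n : ℤ)) (γ z)) ≤ ε)


theorem _root_.IsCompact.exists_forall_dist_le_of_continuousOn {α β ι : Type*}
    [PseudoMetricSpace α] [PseudoMetricSpace β] [Fintype ι] {K : Set α} (hK : IsCompact K)
    {g : ι → α → β} (hg : ∀ i, ContinuousOn (g i) K) {ε : ℝ} (hε : 0 < ε) :
    ∃ δ > 0, ∀ x ∈ K, ∀ y ∈ K, dist x y ≤ δ → ∀ i, dist (g i x) (g i y) ≤ ε := by
  obtain ⟨δ, hδ, hg'⟩ := Metric.uniformContinuousOn_iff_le.1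
    (hK.uniformContinuousOn_of_continuous (continuousOn_pi.2 hg)) ε hε
  exact ⟨δ, hδ, fun x hx y hy hxy i =>
    (dist_le_pi_dist (fun i => g i x) (fun i => g i y) i).trans (hg' x hx y hy hxy)⟩

section

omit [CompactSpace X]

theorem It_eq_coe_zpow (φ : X ≃ₜ X) (n : ℤ) : It φ n = ⇑(φ ^ n) :=
  let toPerm : (X ≃ₜ X) →* Equiv.Perm X :=
    { toFun := Homeomorph.toEquiv, map_one' := rfl, map_mul' := fun _ _ => rfl }
  congrArg DFunLike.coe (map_zpow toPerm φ n).symm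

theorem continuous_It (φ : X ≃ₜ X) (n : ℤ) : Continuous (It φ n) :=
  It_eq_coe_zpow φ n ▸ (φ ^ n).continuous

theorem locS_subset_closedBall (φ : X ≃ₜ X) (z : X) (δ : ℝ) :
    locS φ z δ ⊆ Metric.closedBall z δ :=
  fun _ hw => Metric.mem_closedBall'.2 (hw 0)

theorem locU_subset_closedBall (φ : X ≃ₜ X) (z : X) (δ : ℝ) :
    locU φ z δ ⊆ Metric.closedBall z δ :=
  fun _ hw => Metric.mem_closedBall'.2 (hw 0)

/-- Beyond the time `N` at which `γ` is `ε / 3`-close to the identity, the triangle inequality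
suffices; the finitely many times `|m| ≤ N` are handled by uniform continuity on `K`. -/
theorem exists_forall_dist_It_le_of_conj (φ : X ≃ₜ X) {K U : Set X} {γ : X → X}
    (hK : IsCompact K) (hKU : K ⊆ U) (hc : ContinuousOn γ U)
    (hconj : ∀ ε : ℝ, 0 < ε → ∃ N : ℕ, ∀ n : ℤ, (N : ℤ) ≤ |n| → ∀ z ∈ U,
      dist (It φ n z) (It φ n (γ z)) ≤ ε) {ε : ℝ} (hε : 0 < ε) :
    ∃ δ > 0, ∀ z ∈ K, ∀ w ∈ K, dist z w ≤ δ → ∀ m : ℤ, dist (It φ m z) (It φ m w) ≤ δ →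
      dist (It φ m (γ z)) (It φ m (γ w)) ≤ ε := by
  obtain ⟨N, hN⟩ := hconj (ε / 3) (by positivity)
  obtain ⟨δ, hδ, hfinite⟩ := hK.exists_forall_dist_le_of_continuousOn
    (g := fun m : Finset.Icc (-(N : ℤ)) N => It φ m ∘ γ)
    (fun m => (continuous_It φ m).comp_continuousOn (hc.mono hKU)) hε
  refine ⟨min δ (ε / 3), by positivity, fun z hz w hw hzw m hm => ?_⟩
  rcases le_or_gt |m| N with hmN | hNm
  · exact hfinite z hz w hw (hzw.trans (min_le_left _ _))
      ⟨m, Finset.mem_Icc.2 (abs_le.1 hmN)⟩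
  · calc dist (It φ m (γ z)) (It φ m (γ w))
        ≤ dist (It φ m z) (It φ m (γ z)) + dist (It φ m z) (It φ m w)
          + dist (It φ m w) (It φ m (γ w)) := by
          rw [dist_comm (It φ m z)]; exact dist_triangle4 _ _ _ _
      _ ≤ ε / 3 + ε / 3 + ε / 3 := by
          gcongr
          · exact hN m hNm.le z (hKU hz)
          · exact hm.trans (min_le_right _ _)
          · exact hN m hNm.le w (hKU hw)
      _ = ε := by ring

end

theorem locConj_uniform_stable_unstable_general (φ : X ≃ₜ X)
    (U : Set X) (γ : X → X) (hU : IsOpen U)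
    (hc : ContinuousOn γ U)
    (hconj : ∀ ε : ℝ, 0 < ε → ∃ N : ℕ, ∀ n : ℤ, (N : ℤ) ≤ |n| → ∀ z ∈ U,
      dist (It φ n z) (It φ n (γ z)) ≤ ε)
    (W : Set X) (hW : IsCompact W) (hWU : W ⊆ U) :
    ∀ ε : ℝ, 0 < ε → ∃ δ : ℝ, 0 < δ ∧ ∀ z ∈ W,
      locS φ z δ ⊆ U ∧ locU φ z δ ⊆ U ∧
      γ '' locS φ z δ ⊆ locS φ (γ z) ε ∧
      γ '' locU φ z δ ⊆ locU φ (γ z) ε := by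
  intro ε hε
  obtain ⟨r, hr, hrU⟩ := hW.exists_cthickening_subset_open hU hWU
  obtain ⟨δ, hδ, hshadow⟩ :=
    exists_forall_dist_It_le_of_conj φ hW.cthickening hrU hc hconj hε
  refine ⟨min δ r, by positivity, fun z hz => ?_⟩
  have hzK : z ∈ Metric.cthickening r W := Metric.self_subset_cthickening W hz
  have hball : Metric.closedBall z (min δ r) ⊆ Metric.cthickening r W := fun w hw =>
    Metric.mem_cthickening_of_dist_le w z r W hz (hw.trans (min_le_right _ _))
  have hzw {w : X} (hw : w ∈ Metric.closedBall z (min δ r)) : dist z w ≤ δ :=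
    (Metric.mem_closedBall'.1 hw).trans (min_le_left _ _)
  have hSK := (locS_subset_closedBall φ z _).trans hball
  have hUK := (locU_subset_closedBall φ z _).trans hball
  refine ⟨hSK.trans hrU, hUK.trans hrU, ?_, ?_⟩
  · rintro _ ⟨w, hw, rfl⟩ n
    exact hshadow z hzK w (hSK hw) (hzw (locS_subset_closedBall φ z _ hw)) n
      ((hw n).trans (min_le_left _ _))
  · rintro _ ⟨w, hw, rfl⟩ n
    exact hshadow z hzK w (hUK hw) (hzw (locU_subset_closedBall φ z _ hw)) _
      ((hw n).trans (min_le_left _ _))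

/-- a local conjugacy uniformly preserves local stable and
unstable sets over a compact subset of its domain. -/
theorem locConj_uniform_stable_unstable (φ : X ≃ₜ X) (εX η lam : ℝ)
    (hexp : IsExpansive φ εX) (had : IsAdapted φ η lam)
    (U V : Set X) (γ γinv : X → X) (hU : IsOpen U) (hV : IsOpen V)
    (hmaps : Set.MapsTo γ U V) (hmaps' : Set.MapsTo γinv V U)
    (hli : ∀ z ∈ U, γinv (γ z) = z) (hri : ∀ w ∈ V, γ (γinv w) = w)
    (hc : ContinuousOn γ U) (hc' : ContinuousOn γinv V)
    (hconj : ∀ ε : ℝ, 0 < ε → ∃ N : ℕ, ∀ n : ℤ, (N : ℤ) ≤ |n| → ∀ z ∈ U,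
      dist (It φ n z) (It φ n (γ z)) ≤ ε)
    (W : Set X) (hW : IsCompact W) (hWU : W ⊆ U) :
    ∀ ε : ℝ, 0 < ε → ∃ δ : ℝ, 0 < δ ∧ ∀ z ∈ W,
      locS φ z δ ⊆ U ∧ locU φ z δ ⊆ U ∧
      γ '' locS φ z δ ⊆ locS φ (γ z) ε ∧
      γ '' locU φ z δ ⊆ locU φ (γ z) ε :=
  locConj_uniform_stable_unstable_general φ U γ hU hc hconj W hW hWU

end Paper
end

section
/- Let (X,φ) be an expansive dynamical system and p a synchronizing periodic point. Then for any x ∈ X: p ∼_s x if and only if p ∼_lcs x, and p ∼_u x if and only if p ∼_lcu x. That is, the stable equivalence class of p equals its stable local conjugacy class, and likewise for unstable. -/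
/-!
If `p ∼ₛ x`, then for a large multiple `N` of the period of `p` the point `q = φᴺ x` lies in
`Xˢ(p, δ)`, with `δ` so small that the bracket `[z, q]` is defined for every `z ∈ Xᵘ(p, δ)`.
Then `z ↦ [z, q]` is a stable local conjugacy from `p` to `q`: expansiveness makes the bracket
unique, hence continuous (its graph is closed in a compact space) and injective, and the adapted
metric contracts `Xˢ(z, ε)` uniformly, which gives the uniform forward asymptotics. Conjugating
by `φᴺ`, which fixes `p`, yields a stable local conjugacy from `p` to `x`. The unstable case is
the stable one for `φ⁻¹`.
-/

open Filter Topology Set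

theorem continuousOn_of_isClosed_of_unique {α β : Type*} [TopologicalSpace α]
    [TopologicalSpace β] [CompactSpace β] {R : Set (α × β)} (hR : IsClosed R) {f : α → β}
    {s : Set α} (hf : ∀ a ∈ s, (a, f a) ∈ R) (hunique : ∀ a ∈ s, ∀ b, (a, b) ∈ R → b = f a) :
    ContinuousOn f s := by
  refine continuousOn_iff_isClosed.2 fun t ht => ⟨Prod.fst '' (R ∩ Prod.snd ⁻¹' t),
    isClosedMap_fst_of_compactSpace _ (hR.inter (ht.preimage continuous_snd)), ?_⟩
  ext a
  constructor
  · rintro ⟨hat, ha⟩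
    exact ⟨⟨(a, f a), ⟨hf a ha, hat⟩, rfl⟩, ha⟩
  · rintro ⟨⟨⟨a', b⟩, ⟨hab, hbt⟩, rfl⟩, ha⟩
    exact ⟨hunique a' ha b hab ▸ hbt, ha⟩

namespace Paper

variable {X : Type*} [MetricSpace X]

section Iterates

variable (φ : X ≃ₜ X)

lemma It_zero (x : X) : It φ 0 x = x := rfl

lemma It_add (m n : ℤ) (x : X) : It φ (m + n) x = It φ m (It φ n x) := by
  simp [It, zpow_add, Equiv.Perm.mul_apply]

lemma It_neg_It (n : ℤ) (x : X) : It φ (-n) (It φ n x) = x := by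
  rw [← It_add, neg_add_cancel, It_zero]

lemma It_It_neg (n : ℤ) (x : X) : It φ n (It φ (-n) x) = x := by
  simpa using It_neg_It φ (-n) x

lemma It_injective (n : ℤ) : Function.Injective (It φ n) :=
  (φ.toEquiv ^ n).injective

lemma It_natCast_succ (n : ℕ) (x : X) : It φ ((n + 1 : ℕ) : ℤ) x = φ (It φ n x) := by
  rw [Nat.cast_succ, add_comm, It_add]
  rfl

lemma It_continuous (n : ℤ) : Continuous (It φ n) := by
  induction n using Int.induction_on with
  | zero => exact continuous_id
  | succ k ih =>
    have : It φ (k + 1) = φ ∘ It φ k := funext fun x => by rw [add_comm, It_add]; rfl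
    exact this ▸ φ.continuous.comp ih
  | pred k ih =>
    have : It φ (-k - 1) = φ.symm ∘ It φ (-k) := funext fun x => by
      rw [sub_eq_add_neg, add_comm, It_add]; rfl
    exact this ▸ φ.symm.continuous.comp ih

lemma It_symm (n : ℤ) (x : X) : It φ.symm n x = It φ (-n) x := by
  change (φ.toEquiv⁻¹ ^ n) x = (φ.toEquiv ^ (-n)) x
  rw [inv_zpow, zpow_neg]

end Iterates

section LocalSets

variable {φ : X ≃ₜ X} {x y z : X} {ε ε' : ℝ}

lemma locS_symm (φ : X ≃ₜ X) (x : X) (ε : ℝ) : locS φ.symm x ε = locU φ x ε := by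
  ext y; simp only [locS, locU, mem_ofPred_eq, It_symm]

lemma locU_symm (φ : X ≃ₜ X) (x : X) (ε : ℝ) : locU φ.symm x ε = locS φ x ε := by
  ext y; simp only [locS, locU, mem_ofPred_eq, It_symm, neg_neg]

lemma mem_locU_self (hε : 0 ≤ ε) : x ∈ locU φ x ε := fun n => by rwa [dist_self]

lemma locS_mono (h : ε ≤ ε') : locS φ x ε ⊆ locS φ x ε' := fun _ hy n => (hy n).trans h

lemma locU_mono (h : ε ≤ ε') : locU φ x ε ⊆ locU φ x ε' := fun _ hy n => (hy n).trans h

lemma mem_locS_comm : y ∈ locS φ x ε ↔ x ∈ locS φ y ε := by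
  simp only [locS, mem_ofPred_eq, dist_comm]

lemma mem_locU_comm : y ∈ locU φ x ε ↔ x ∈ locU φ y ε := by
  simp only [locU, mem_ofPred_eq, dist_comm]

lemma mem_locS_trans (hy : y ∈ locS φ x ε) (hz : z ∈ locS φ y ε') : z ∈ locS φ x (ε + ε') :=
  fun n => (dist_triangle _ _ _).trans (add_le_add (hy n) (hz n))

lemma mem_locU_trans (hy : y ∈ locU φ x ε) (hz : z ∈ locU φ y ε') : z ∈ locU φ x (ε + ε') :=
  fun n => (dist_triangle _ _ _).trans (add_le_add (hy n) (hz n))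

lemma dist_le_of_mem_locS (hy : y ∈ locS φ x ε) : dist x y ≤ ε := hy 0

lemma dist_le_of_mem_locU (hy : y ∈ locU φ x ε) : dist x y ≤ ε := hy 0

lemma It_mem_locS (m : ℕ) (hy : y ∈ locS φ x ε) : It φ m y ∈ locS φ (It φ m x) ε := fun n => by
  simpa only [← It_add, Nat.cast_add] using hy (n + m)

lemma isClosed_setOf_mem_locS (φ : X ≃ₜ X) (ε : ℝ) :
    IsClosed {p : X × X | p.2 ∈ locS φ p.1 ε} := by
  change IsClosed {p : X × X | ∀ n : ℕ, dist (It φ n p.1) (It φ n p.2) ≤ ε}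
  rw [ofPred_forall]
  exact isClosed_iInter fun n => isClosed_le
    ((It_continuous φ n).comp continuous_fst |>.dist ((It_continuous φ n).comp continuous_snd))
    continuous_const

lemma isClosed_locU (φ : X ≃ₜ X) (x : X) (ε : ℝ) : IsClosed (locU φ x ε) := by
  rw [← locS_symm]
  exact (isClosed_setOf_mem_locS φ.symm ε).preimage (Continuous.prodMk_right x)

end LocalSets

lemma IsAdapted.dist_It_le {φ : X ≃ₜ X} {η lam : ℝ} (had : IsAdapted φ η lam) {y w : X}
    (hw : w ∈ locS φ y η) (n : ℕ) : dist (It φ n y) (It φ n w) ≤ lam ^ n * dist y w := by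
  induction n with
  | zero => simp [It_zero]
  | succ n ih =>
    rw [It_natCast_succ, It_natCast_succ, pow_succ', mul_assoc]
    exact (had.2.2.2.1 _ _ (It_mem_locS n hw)).trans (mul_le_mul_of_nonneg_left ih had.2.1.le)

lemma IsAdapted.exists_forall_dist_It_le {φ : X ≃ₜ X} {η lam : ℝ} (had : IsAdapted φ η lam)
    {ε : ℝ} (hε : 0 < ε) :
    ∃ N : ℕ, ∀ n ≥ N, ∀ y, ∀ w ∈ locS φ y η, dist (It φ n y) (It φ n w) ≤ ε := by
  have hlim : Tendsto (fun n : ℕ => lam ^ n * η) atTop (𝓝 0) := by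
    simpa using (tendsto_pow_atTop_nhds_zero_of_lt_one had.2.1.le had.2.2.1).mul_const η
  obtain ⟨N, hN⟩ := eventually_atTop.1 (hlim.eventually (ge_mem_nhds hε))
  exact ⟨N, fun n hn y w hw => (had.dist_It_le hw n).trans
    ((mul_le_mul_of_nonneg_left (dist_le_of_mem_locS hw) (pow_nonneg had.2.1.le n)).trans (hN n hn))⟩

lemma IsExpansive.eq_of_mem_locS_of_mem_locU {φ : X ≃ₜ X} {εX : ℝ} (hexp : IsExpansive φ εX)
    {x y : X} (hs : y ∈ locS φ x εX) (hu : y ∈ locU φ x εX) : x = y := by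
  refine hexp.2 x y fun n => ?_
  obtain ⟨k, rfl | rfl⟩ := Int.eq_nat_or_neg n
  exacts [hs k, hu k]

lemma IsExpansive.subsingleton_locS_inter_locU {φ : X ≃ₜ X} {εX ε : ℝ}
    (hexp : IsExpansive φ εX) (hε : 2 * ε ≤ εX) (y q : X) :
    (locS φ y ε ∩ locU φ q ε).Subsingleton := fun w hw w' hw' =>
  hexp.eq_of_mem_locS_of_mem_locU
    (locS_mono (by linarith) (mem_locS_trans (mem_locS_comm.1 hw.1) hw'.1))
    (locU_mono (by linarith) (mem_locU_trans (mem_locU_comm.1 hw.2) hw'.2))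

open Classical in
noncomputable def bracket (φ : X ≃ₜ X) (ε : ℝ) (y q : X) : X :=
  if h : (locS φ y ε ∩ locU φ q ε).Nonempty then h.some else y

lemma bracket_mem {φ : X ≃ₜ X} {ε : ℝ} {y q : X} (h : (locS φ y ε ∩ locU φ q ε).Nonempty) :
    bracket φ ε y q ∈ locS φ y ε ∩ locU φ q ε := by
  rw [bracket, dif_pos h]
  exact h.some_mem

lemma IsExpansive.injOn_bracket {φ : X ≃ₜ X} {εX ε δ : ℝ} (hexp : IsExpansive φ εX)
    (hε : 2 * ε ≤ εX) (hδ : 2 * δ ≤ εX) {p q : X}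
    (hne : ∀ z ∈ locU φ p δ, (locS φ z ε ∩ locU φ q ε).Nonempty) :
    InjOn (bracket φ ε · q) (locU φ p δ) := by
  intro z hz z' hz' (h : bracket φ ε z q = bracket φ ε z' q)
  have hs : z' ∈ locS φ z (ε + ε) :=
    mem_locS_trans (bracket_mem (hne z hz)).1 (mem_locS_comm.1 (h ▸ (bracket_mem (hne z' hz')).1))
  have hu : z' ∈ locU φ z (δ + δ) := mem_locU_trans (mem_locU_comm.1 hz) hz'
  exact hexp.eq_of_mem_locS_of_mem_locU (locS_mono (by linarith) hs) (locU_mono (by linarith) hu)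

lemma IsSyncPt.exists_nonempty_locS_inter_locU {φ : X ≃ₜ X} {ε₀ : ℝ} {p : X}
    (h : IsSyncPt φ ε₀ p) : ∃ ε δ : ℝ, 0 < δ ∧ δ ≤ ε ∧ ε ≤ ε₀ ∧
      ∀ a b, dist a p ≤ δ → dist b p ≤ δ → (locS φ a ε ∩ locU φ b ε).Nonempty := by
  obtain ⟨ε, hε, hεε₀, hint⟩ := h
  obtain ⟨δ, hδ, hball⟩ :=
    Metric.nhds_basis_closedBall.mem_iff.1 (mem_interior_iff_mem_nhds.1 hint)
  refine ⟨ε, min δ ε, lt_min hδ hε, min_le_right _ _, hεε₀, fun a b ha hb => @hball (a, b) ?_⟩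
  rw [← closedBall_prod_same]
  exact ⟨ha.trans (min_le_left _ _), hb.trans (min_le_left _ _)⟩

lemma StableLC.stableEq {φ : X ≃ₜ X} {p x : X} (h : StableLC φ p x) : StableEq φ p x := by
  obtain ⟨δ, -, γ, hδ, -, -, -, -, hγ, hasym⟩ := h
  refine Metric.tendsto_atTop.2 fun ε hε => ?_
  obtain ⟨N, hN⟩ := hasym (ε / 2) (half_pos hε)
  refine ⟨N, fun n hn => ?_⟩
  have := hN n hn p (mem_locU_self hδ.le)
  rw [hγ] at this
  rw [Real.dist_0_eq_abs, abs_of_nonneg dist_nonneg]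
  linarith

lemma IsPeriodic.exists_ge_It_eq {φ : X ≃ₜ X} {p : X} (h : IsPeriodic φ p) (N₀ : ℕ) :
    ∃ N ≥ N₀, It φ N p = p := by
  obtain ⟨r, hr, hrp⟩ := h
  refine ⟨r * N₀, Nat.le_mul_of_pos_left N₀ hr, ?_⟩
  change (φ.toEquiv ^ ((r * N₀ : ℕ) : ℤ)) p = p
  rw [Nat.cast_mul, zpow_mul]
  exact Equiv.Perm.zpow_apply_eq_self_of_apply_eq_self hrp _

section Reversal

variable {φ : X ≃ₜ X}

lemma unstableEq_iff_stableEq_symm {x y : X} : UnstableEq φ x y ↔ StableEq φ.symm x y := by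
  simp only [UnstableEq, StableEq, It_symm]

lemma unstableLC_iff_stableLC_symm {x y : X} : UnstableLC φ x y ↔ StableLC φ.symm x y := by
  simp only [UnstableLC, StableLC, It_symm, locU_symm]

lemma IsExpansive.symm {εX : ℝ} (h : IsExpansive φ εX) : IsExpansive φ.symm εX :=
  ⟨h.1, fun x y hxy => h.2 x y fun n => by simpa only [It_symm, neg_neg] using hxy (-n)⟩

lemma IsAdapted.symm {η lam : ℝ} (h : IsAdapted φ η lam) : IsAdapted φ.symm η lam := by
  obtain ⟨hη, hlam, hlam1, hs, hu⟩ := h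
  refine ⟨hη, hlam, hlam1, fun x y hy => ?_, fun x y hy => ?_⟩
  · exact hu x y (locS_symm φ x η ▸ hy)
  · simpa only [Homeomorph.symm_symm] using hs x y (locU_symm φ x η ▸ hy)

lemma IsPeriodic.symm {p : X} (h : IsPeriodic φ p) : IsPeriodic φ.symm p := by
  obtain ⟨n, hn, hnp⟩ := h
  refine ⟨n, hn, ?_⟩
  rw [It_symm]
  nth_rw 1 [← hnp]
  exact It_neg_It φ n p

lemma IsSyncPt.symm {ε₀ : ℝ} {p : X} (h : IsSyncPt φ ε₀ p) : IsSyncPt φ.symm ε₀ p := by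
  obtain ⟨ε, hε, hεε₀, hint⟩ := h
  have hD : Dset φ.symm ε = Prod.swap ⁻¹' Dset φ ε := by
    ext z
    simp only [Dset, mem_ofPred_eq, mem_preimage, locS_symm, locU_symm, Prod.fst_swap,
      Prod.snd_swap, inter_comm]
  refine ⟨ε, hε, hεε₀, ?_⟩
  rw [hD, ← Homeomorph.coe_prodComm, ← Homeomorph.preimage_interior]
  exact hint

end Reversal

variable [CompactSpace X]

lemma IsExpansive.continuousOn_bracket {φ : X ≃ₜ X} {εX ε : ℝ} (hexp : IsExpansive φ εX)
    (hε : 2 * ε ≤ εX) {q : X} {s : Set X} (hs : ∀ y ∈ s, (locS φ y ε ∩ locU φ q ε).Nonempty) :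
    ContinuousOn (bracket φ ε · q) s :=
  continuousOn_of_isClosed_of_unique
    ((isClosed_setOf_mem_locS φ ε).inter ((isClosed_locU φ q ε).preimage continuous_snd))
    (fun y hy => bracket_mem (hs y hy))
    fun y hy _ hw => hexp.subsingleton_locS_inter_locU hε y q hw (bracket_mem (hs y hy))

lemma exists_mapsTo_It_locU (φ : X ≃ₜ X) (N : ℕ) {δ : ℝ} (hδ : 0 < δ) :
    ∃ δ₀ > 0, ∀ a, MapsTo (It φ N) (locU φ a δ₀) (locU φ (It φ N a) δ) := by
  have huc : UniformContinuous fun z (m : Fin (N + 1)) => It φ m z :=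
    CompactSpace.uniformContinuous_of_continuous (continuous_pi fun m => It_continuous φ m)
  obtain ⟨δ₀, hδ₀, hclose⟩ := Metric.uniformContinuous_iff.1 huc δ hδ
  have hfin : ∀ {x y : X}, dist x y ≤ δ₀ / 2 → ∀ m ≤ N, dist (It φ m x) (It φ m y) ≤ δ :=
    fun hxy m hm => ((dist_le_pi_dist _ _ (⟨m, by omega⟩ : Fin (N + 1))).trans_lt
      (hclose (by linarith))).le
  refine ⟨δ₀ / 2, half_pos hδ₀, fun a z hz n => ?_⟩
  rcases le_or_gt n N with hn | hn
  · obtain ⟨k, rfl⟩ := Nat.exists_eq_add_of_le hn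
    rw [← It_add, ← It_add, Nat.cast_add, neg_add_cancel_left]
    exact hfin (dist_le_of_mem_locU hz) k (by omega)
  · obtain ⟨k, rfl⟩ := Nat.exists_eq_add_of_lt hn
    have hk : -((N + k + 1 : ℕ) : ℤ) + N = -((k + 1 : ℕ) : ℤ) := by push_cast; ring
    rw [← It_add, ← It_add, hk]
    exact hfin (hz (k + 1)) 0 (Nat.zero_le N)

lemma StableLC.of_It {φ : X ≃ₜ X} {a b : X} (N : ℕ) (h : StableLC φ (It φ N a) (It φ N b)) :
    StableLC φ a b := by
  obtain ⟨δ, δ', γ, hδ, hδ', hmap, hinj, hcont, hγ, hasym⟩ := h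
  obtain ⟨δ₀, hδ₀, hforward⟩ := exists_mapsTo_It_locU φ N hδ
  have hback : MapsTo (It φ (-N)) (locU φ (It φ N b) δ') (locU φ b δ') := fun w hw n => by
    simpa only [← It_add, Nat.cast_add, neg_add, neg_add_cancel_right] using hw (n + N)
  refine ⟨δ₀, δ', fun z => It φ (-N) (γ (It φ N z)), hδ₀, hδ',
    hback.comp (hmap.comp (hforward a)),
    (It_injective φ _).injOn.comp (hinj.comp (It_injective φ _).injOn (hforward a))
      (hmap.comp (hforward a)),
    (It_continuous φ _).comp_continuousOn
      (hcont.comp (It_continuous φ _).continuousOn (hforward a)),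
    by simp only [hγ, It_neg_It], fun ε hε => ?_⟩
  obtain ⟨M, hM⟩ := hasym ε hε
  refine ⟨M + N, fun n hn z hz => ?_⟩
  obtain ⟨k, rfl⟩ := Nat.exists_eq_add_of_le' (le_of_add_le_right hn)
  simpa only [Nat.cast_add, It_add, It_It_neg] using hM k (by omega) _ (hforward a hz)

theorem exists_forall_mem_locS_stableLC {φ : X ≃ₜ X} {εX η lam : ℝ} (hexp : IsExpansive φ εX)
    (had : IsAdapted φ η lam) {p : X} (hps : IsSyncPt φ (min η (εX / 2)) p) :
    ∃ δ > 0, ∀ q ∈ locS φ p δ, StableLC φ p q := by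
  obtain ⟨ε, δ, hδ, hδε, hε, hD⟩ := hps.exists_nonempty_locS_inter_locU
  have hεη : ε ≤ η := hε.trans (min_le_left _ _)
  have hεX : 2 * ε ≤ εX := by linarith [hε.trans (min_le_right _ _)]
  refine ⟨δ, hδ, fun q hq => ?_⟩
  have hne : ∀ z ∈ locU φ p δ, (locS φ z ε ∩ locU φ q ε).Nonempty := fun z hz =>
    hD z q (dist_comm p z ▸ dist_le_of_mem_locU hz) (dist_comm p q ▸ dist_le_of_mem_locS hq)
  have hp : bracket φ ε p q = q :=
    hexp.subsingleton_locS_inter_locU hεX p q (bracket_mem (hne p (mem_locU_self hδ.le)))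
      ⟨locS_mono hδε hq, mem_locU_self (hδ.le.trans hδε)⟩
  refine ⟨δ, ε, (bracket φ ε · q), hδ, hδ.trans_le hδε, fun z hz => (bracket_mem (hne z hz)).2,
    hexp.injOn_bracket hεX (by linarith) hne, hexp.continuousOn_bracket hεX hne, hp,
    fun ε' hε' => ?_⟩
  obtain ⟨N, hN⟩ := had.exists_forall_dist_It_le hε'
  exact ⟨N, fun n hn z hz => hN n hn z _ (locS_mono hεη (bracket_mem (hne z hz)).1)⟩

theorem stableLC_of_stableEq {φ : X ≃ₜ X} {εX η lam : ℝ} (hexp : IsExpansive φ εX)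
    (had : IsAdapted φ η lam) {p x : X} (hp : IsPeriodic φ p)
    (hps : IsSyncPt φ (min η (εX / 2)) p) (h : StableEq φ p x) : StableLC φ p x := by
  obtain ⟨δ, hδ, hloc⟩ := exists_forall_mem_locS_stableLC hexp had hps
  obtain ⟨N₀, hN₀⟩ := Metric.tendsto_atTop.1 h δ hδ
  obtain ⟨N, hN, hpN⟩ := hp.exists_ge_It_eq N₀
  refine StableLC.of_It N ?_
  rw [hpN]
  refine hloc _ fun n => ?_
  have := hN₀ (n + N) (by omega)
  rw [Real.dist_0_eq_abs, abs_of_nonneg dist_nonneg] at this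
  rw [← hpN]
  simpa only [← It_add, Nat.cast_add] using this.le

/-- for a synchronizing periodic point `p`, stable equivalence
coincides with stable local conjugacy, and likewise for unstable. -/
theorem sync_periodic_lc_classes (φ : X ≃ₜ X) (εX η lam : ℝ)
    (hexp : IsExpansive φ εX) (had : IsAdapted φ η lam) (p : X)
    (hp : IsPeriodic φ p) (hps : IsSyncPt φ (min η (εX / 2)) p) :
    ∀ x : X, (StableEq φ p x ↔ StableLC φ p x) ∧
      (UnstableEq φ p x ↔ UnstableLC φ p x) := by
  intro x
  refine ⟨⟨stableLC_of_stableEq hexp had hp hps, StableLC.stableEq⟩, ?_⟩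
  rw [unstableEq_iff_stableEq_symm, unstableLC_iff_stableLC_symm]
  exact ⟨stableLC_of_stableEq hexp.symm had.symm hp.symm hps.symm, StableLC.stableEq⟩

end Paper
end
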